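/- arXiv:2602.06598 — 2 statements merged into one kernel-verified Lean document; each statement's English description precedes it below -/
import Mathlib

section
/- Let g, g' : ℝ≥0 → ℝ be strictly increasing functions that agree everywhere except possibly at a single point x₀. If x, x' ≥ 0 satisfy (g(x) − g'(x'))·(x' − x) ≥ 0, then x = x'. -/
/-- If g, g' : ℝ≥0 → ℝ are strictly increasing and agree everywhere except possibly at a
single point x₀, and x, x' ≥ 0 satisfy (g(x) − g'(x'))·(x' − x) ≥ 0, then x = x'. -/
theorem strictmono_vi_pointwise (g g' : NNReal → ℝ) (hg : StrictMono g) (hg' : StrictMono g')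
    (x₀ : NNReal) (hagree : ∀ x, x ≠ x₀ → g x = g' x)
    (x x' : NNReal) (h : 0 ≤ (g x - g' x') * ((x' : ℝ) - (x : ℝ))) :
    x = x' := by
  by_contra hne
  rcases lt_or_gt_of_ne hne with hlt | hlt
  · have hd : (0:ℝ) < (x' : ℝ) - (x : ℝ) := by
      have : (x:ℝ) < (x':ℝ) := by exact_mod_cast hlt
      linarith
    have hge : g' x' ≤ g x := by nlinarith
    have hcontra : g x < g' x' := by
      by_cases hx : x = x₀
      · have hx' : x' ≠ x₀ := by rintro rfl; exact hne hx
        calc g x < g x' := hg hlt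
          _ = g' x' := hagree x' hx'
      · calc g x = g' x := hagree x hx
          _ < g' x' := hg' hlt
    linarith
  · have hd : ((x'):ℝ) - (x:ℝ) < 0 := by
      have : (x':ℝ) < (x:ℝ) := by exact_mod_cast hlt
      linarith
    have hle : g x ≤ g' x' := by nlinarith
    have hcontra : g' x' < g x := by
      by_cases hx' : x' = x₀
      · have hx : x ≠ x₀ := by rintro rfl; exact hne hx'.symm
        calc g' x' < g' x := hg' hlt
          _ = g x := (hagree x hx).symm
      · calc g' x' = g x' := (hagree x' hx').symm
          _ < g x := hg hlt
    linarith
end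

section
/- Let f* be the minimum-cost feasible flow for (G, r, ℓ) with linear latencies ℓ_e(x) = (1/2)a_e x + b_e, and set ω_e = (1/2)a_e f*_e. Then the extended flow assigning all of f* to priority lanes (f̃_{e^V} = f*_e, f̃_{e^R} = 0) is an equilibrium of the extended instance: for every commodity i and paths P, Q ∈ 𝒫_i with f̃ routing positive flow on (the all-priority version of) P, the perceived cost of P is at most that of Q. -/
/-- With marginal-cost priority fees ω_e = (1/2)a_e f*_e, the extended flow routing all of the
optimal flow f* on priority lanes is an equilibrium: for every commodity, every used path P and
every alternative path Q with any choice S of priority edges, the perceived cost of the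
all-priority version of P is at most the perceived cost of the extended version of Q. -/
theorem marginal_fee_equilibrium {E ι Path : Type*} [Fintype E] [Fintype Path]
    [DecidableEq E] [DecidableEq ι]
    (comm : Path → ι) (edges : Path → Finset E) (r : ι → ℝ)
    (a b ω : E → ℝ) (ha : ∀ e, 0 ≤ a e) (hb : ∀ e, 0 ≤ b e)
    (fstar : Path → ℝ)
    (h0 : ∀ P, 0 ≤ fstar P)
    (hrr : ∀ i, ∑ P ∈ Finset.univ.filter (fun P => comm P = i), fstar P = r i)
    (hω : ∀ e : E, ω e = (1 / 2) * a e *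
      (∑ P ∈ Finset.univ.filter (fun P => e ∈ edges P), fstar P))
    (hopt : ∀ f : Path → ℝ, (∀ P, 0 ≤ f P) →
      (∀ i, ∑ P ∈ Finset.univ.filter (fun P => comm P = i), f P = r i) →
      (∑ e : E, (∑ P ∈ Finset.univ.filter (fun P => e ∈ edges P), fstar P) *
          ((1 / 2) * a e * (∑ P ∈ Finset.univ.filter (fun P => e ∈ edges P), fstar P) + b e)) ≤
      (∑ e : E, (∑ P ∈ Finset.univ.filter (fun P => e ∈ edges P), f P) *
          ((1 / 2) * a e * (∑ P ∈ Finset.univ.filter (fun P => e ∈ edges P), f P) + b e))) :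
    ∀ P Q : Path, comm P = comm Q → 0 < fstar P → ∀ S : Finset E, S ⊆ edges Q →
      (∑ e ∈ edges P, ((1 / 2) * a e *
          (∑ P' ∈ Finset.univ.filter (fun P' => e ∈ edges P'), fstar P') + b e + ω e)) ≤
      (∑ e ∈ S, ((1 / 2) * a e *
          (∑ P' ∈ Finset.univ.filter (fun P' => e ∈ edges P'), fstar P') + b e + ω e)) +
      (∑ e ∈ edges Q \ S, (a e *
          (∑ P' ∈ Finset.univ.filter (fun P' => e ∈ edges P'), fstar P') + b e)) := by
  classical
  intro P Q hcomm hfP S hS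
  set F : E → ℝ := fun e => ∑ P' ∈ Finset.univ.filter (fun P' => e ∈ edges P'), fstar P'
    with hFdef
  have key : ∑ e ∈ edges P, (a e * F e + b e) ≤ ∑ e ∈ edges Q, (a e * F e + b e) := by
    by_cases hPQ : P = Q
    · subst hPQ; exact le_refl _
    · set d : E → ℝ := fun e =>
        (if e ∈ edges Q then (1:ℝ) else 0) - (if e ∈ edges P then (1:ℝ) else 0) with hddef
      set K : ℝ := ∑ e : E, (1/2) * a e * d e ^ 2 with hKdef
      have hK : 0 ≤ K :=
        Finset.sum_nonneg fun e _ => by have := ha e; positivity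
      have hDsum : (∑ e ∈ edges Q, (a e * F e + b e)) - (∑ e ∈ edges P, (a e * F e + b e))
          = ∑ e : E, d e * (a e * F e + b e) := by
        simp only [hddef, sub_mul, one_mul, ite_mul, zero_mul, Finset.sum_sub_distrib]
        congr 1 <;> simp [Finset.sum_ite_mem]
      set D : ℝ := ∑ e : E, d e * (a e * F e + b e) with hDdef
      have hstep : ∀ ε : ℝ, 0 ≤ ε → ε ≤ fstar P → 0 ≤ ε * D + ε ^ 2 * K := by
        intro ε hε hεle
        set g : Path → ℝ := fun P' => fstar P' +
          ε * ((if P' = Q then (1:ℝ) else 0) - (if P' = P then (1:ℝ) else 0)) with hgdef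
        have hgnn : ∀ P', 0 ≤ g P' := by
          intro P'
          by_cases h1 : P' = P
          · subst h1
            simp only [hgdef]
            simp [hPQ]
            nlinarith
          · by_cases h2 : P' = Q
            · subst h2
              simp only [hgdef]
              simp [h1]
              nlinarith [h0 P']
            · simp only [hgdef]
              simp [h1, h2]
              nlinarith [h0 P']
        have hgr : ∀ i, ∑ P' ∈ Finset.univ.filter (fun P' => comm P' = i), g P' = r i := by
          intro i
          simp only [hgdef, Finset.sum_add_distrib, hrr i, mul_sub, Finset.sum_sub_distrib,
            ← Finset.mul_sum, Finset.sum_ite_eq', Finset.mem_filter, Finset.mem_univ,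
            true_and, hcomm]
          by_cases hi : comm Q = i <;> simp [hi]
        have hGe : ∀ e : E, (∑ P' ∈ Finset.univ.filter (fun P' => e ∈ edges P'), g P')
            = F e + ε * d e := by
          intro e
          simp only [hgdef, hFdef, hddef, Finset.sum_add_distrib, mul_sub,
            Finset.sum_sub_distrib, ← Finset.mul_sum, Finset.sum_ite_eq', Finset.mem_filter,
            Finset.mem_univ, true_and]
        have h := hopt g hgnn hgr
        simp only [hGe] at h
        have h' : (∑ e : E, F e * ((1/2) * a e * F e + b e)) ≤
            ∑ e : E, (F e + ε * d e) * ((1/2) * a e * (F e + ε * d e) + b e) := h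
        have hexp : (∑ e : E, (F e + ε * d e) * ((1/2) * a e * (F e + ε * d e) + b e))
            = (∑ e : E, F e * ((1/2) * a e * F e + b e)) + (ε * D + ε ^ 2 * K) := by
          rw [hDdef, hKdef, Finset.mul_sum, Finset.mul_sum, ← Finset.sum_add_distrib,
            ← Finset.sum_add_distrib]
          exact Finset.sum_congr rfl fun e _ => by ring
        rw [hexp] at h'
        linarith
      by_contra hlt
      push_neg at hlt
      have hD : D < 0 := by rw [← hDsum]; linarith
      set ε : ℝ := min (fstar P) (-D / (2 * K + 1)) with hεdef
      have hεpos : 0 < ε := lt_min hfP (div_pos (by linarith) (by linarith))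
      have hεle : ε ≤ fstar P := min_le_left _ _
      have hε2 : ε * (2 * K + 1) ≤ -D := by
        have hm := min_le_right (fstar P) (-D / (2 * K + 1))
        rw [← hεdef] at hm
        have h21 : (0:ℝ) < 2 * K + 1 := by linarith
        calc ε * (2 * K + 1) ≤ (-D / (2 * K + 1)) * (2 * K + 1) :=
              mul_le_mul_of_nonneg_right hm (le_of_lt h21)
          _ = -D := by field_simp
      have h1 := hstep ε (le_of_lt hεpos) hεle
      nlinarith
  calc (∑ e ∈ edges P, ((1 / 2) * a e *
          (∑ P' ∈ Finset.univ.filter (fun P' => e ∈ edges P'), fstar P') + b e + ω e))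
      = ∑ e ∈ edges P, (a e * F e + b e) := by
        refine Finset.sum_congr rfl fun e _ => ?_
        rw [hω e]; simp only [hFdef]; ring
    _ ≤ ∑ e ∈ edges Q, (a e * F e + b e) := key
    _ = (∑ e ∈ S, (a e * F e + b e)) + (∑ e ∈ edges Q \ S, (a e * F e + b e)) := by
        rw [← Finset.sum_sdiff hS, add_comm]
    _ = _ := by
        congr 1
        refine Finset.sum_congr rfl fun e _ => ?_
        rw [hω e]; simp only [hFdef]; ring
end
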